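/- The asymptotic key rate for collective attacks r(Q) = 1 − h(1/2 + (1/2)√(16ω(ω−1)+3)) − h(Q), with ω = (4 + 2√2(1−2Q))/8 (depolarizing-noise model, γ → 0), is strictly decreasing in Q on [0, 1/2], positive at Q = 0 (where it equals 1), and there exists Q* ∈ (0, 1/2) with r(Q*) = 0 (numerically Q* ≈ 0.071). -/
import Mathlib

open Real

/-- Binary entropy h(p) = −p log₂ p − (1−p) log₂(1−p). -/
noncomputable def binEnt2 (p : ℝ) : ℝ :=
  -(p * Real.logb 2 p) - (1 - p) * Real.logb 2 (1 - p)

/-- Asymptotic key rate for collective attacks in the depolarizing-noise model: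
r(Q) = 1 − h(1/2 + (1/2)√(16ω(ω−1)+3)) − h(Q) with ω = (4 + 2√2(1−2Q))/8. -/
noncomputable def asympRate (Q : ℝ) : ℝ :=
  1 - binEnt2 (1 / 2 + (1 / 2) *
        sqrt (16 * ((4 + 2 * sqrt 2 * (1 - 2 * Q)) / 8) *
          (((4 + 2 * sqrt 2 * (1 - 2 * Q)) / 8) - 1) + 3))
    - binEnt2 Q

lemma binEnt2_eq (p : ℝ) : binEnt2 p = Real.binEntropy p / Real.log 2 := by
  unfold binEnt2 Real.binEntropy Real.logb
  rw [Real.log_inv, Real.log_inv]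
  ring

noncomputable def gfun (Q : ℝ) : ℝ := 1 / 2 + (1 / 2) * sqrt (2 * (1 - 2 * Q) ^ 2 - 1)

lemma asympRate_eq (Q : ℝ) : asympRate Q = 1 - binEnt2 (gfun Q) - binEnt2 Q := by
  unfold asympRate gfun
  have h2 : sqrt 2 * sqrt 2 = 2 := Real.mul_self_sqrt (by norm_num)
  have harg : 16 * ((4 + 2 * sqrt 2 * (1 - 2 * Q)) / 8) *
      (((4 + 2 * sqrt 2 * (1 - 2 * Q)) / 8) - 1) + 3 = 2 * (1 - 2 * Q) ^ 2 - 1 := by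
    linear_combination (1 - 2 * Q) ^ 2 * h2
  rw [harg]

lemma gfun_mem {Q : ℝ} (h0 : 0 ≤ Q) (h1 : Q ≤ 1 / 2) :
    gfun Q ∈ Set.Icc (2⁻¹ : ℝ) 1 := by
  constructor
  · have := Real.sqrt_nonneg (2 * (1 - 2 * Q) ^ 2 - 1)
    unfold gfun; nlinarith
  · have hle : sqrt (2 * (1 - 2 * Q) ^ 2 - 1) ≤ 1 := by
      rw [Real.sqrt_le_one]
      nlinarith
    unfold gfun; nlinarith

lemma gfun_anti {x y : ℝ} (hx : 0 ≤ x) (hy : y ≤ 1 / 2) (hxy : x ≤ y) :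
    gfun y ≤ gfun x := by
  unfold gfun
  have : sqrt (2 * (1 - 2 * y) ^ 2 - 1) ≤ sqrt (2 * (1 - 2 * x) ^ 2 - 1) := by
    apply Real.sqrt_le_sqrt
    nlinarith
  linarith

lemma asympRate_half : asympRate (1 / 2) = -1 := by
  rw [asympRate_eq]
  have : gfun (1 / 2) = 1 / 2 := by
    unfold gfun
    rw [show 2 * (1 - 2 * (1 / 2 : ℝ)) ^ 2 - 1 = -1 by norm_num,
      show Real.sqrt (-1) = 0 from Real.sqrt_eq_zero'.mpr (by norm_num)]
    norm_num
  rw [this]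
  have hb : binEnt2 (1 / 2) = 1 := by
    rw [binEnt2_eq, show (1 / 2 : ℝ) = 2⁻¹ by norm_num, Real.binEntropy_two_inv,
      div_self (Real.log_ne_zero_of_pos_of_ne_one (by norm_num) (by norm_num))]
  rw [hb]; ring

lemma asympRate_zero : asympRate 0 = 1 := by
  rw [asympRate_eq]
  have : gfun 0 = 1 := by
    unfold gfun
    rw [show 2 * (1 - 2 * (0 : ℝ)) ^ 2 - 1 = 1 by norm_num, Real.sqrt_one]
    norm_num
  rw [this]
  have h1 : binEnt2 1 = 0 := by rw [binEnt2_eq, Real.binEntropy_one]; simp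
  have h0 : binEnt2 0 = 0 := by rw [binEnt2_eq, Real.binEntropy_zero]; simp
  rw [h0, h1]; ring

lemma asympRate_strictAnti : StrictAntiOn asympRate (Set.Icc (0 : ℝ) (1 / 2)) := by
  intro x hx y hy hxy
  rw [asympRate_eq, asympRate_eq]
  have hlog : 0 < Real.log 2 := Real.log_pos (by norm_num)
  have hmono : Real.binEntropy x < Real.binEntropy y := by
    apply Real.binEntropy_strictMonoOn _ _ hxy
    · exact ⟨hx.1, by simpa using hx.2⟩
    · exact ⟨hy.1, by simpa using hy.2⟩
  have hanti : Real.binEntropy (gfun x) ≤ Real.binEntropy (gfun y) := by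
    apply Real.binEntropy_strictAntiOn.antitoneOn
      (gfun_mem hy.1 hy.2) (gfun_mem hx.1 hx.2)
      (gfun_anti hx.1 hy.2 hxy.le)
  rw [binEnt2_eq, binEnt2_eq, binEnt2_eq, binEnt2_eq]
  have h1 : Real.binEntropy x / Real.log 2 < Real.binEntropy y / Real.log 2 := by
    gcongr
  have h2 : Real.binEntropy (gfun x) / Real.log 2 ≤ Real.binEntropy (gfun y) / Real.log 2 := by
    gcongr
  linarith

/-- The asymptotic key rate r(Q) is strictly decreasing in Q on
[0, 1/2], equals 1 at Q = 0 (in particular is positive there), and has a zero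
Q* ∈ (0, 1/2) (numerically Q* ≈ 0.071). -/
theorem asymptotic_rate_zero_crossing :
    StrictAntiOn asympRate (Set.Icc (0 : ℝ) (1 / 2)) ∧
    asympRate 0 = 1 ∧
    ∃ Qstar ∈ Set.Ioo (0 : ℝ) (1 / 2), asympRate Qstar = 0 := by
  refine ⟨asympRate_strictAnti, asympRate_zero, ?_⟩
  have hcont : ContinuousOn asympRate (Set.Icc (0 : ℝ) (1 / 2)) := by
    have : Continuous asympRate := by
      have hc : Continuous fun Q : ℝ => asympRate Q := by
        simp only [asympRate_eq, binEnt2_eq, gfun]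
        fun_prop
      exact hc
    exact this.continuousOn
  have h0 : (0 : ℝ) ∈ Set.Ioo (asympRate (1 / 2)) (asympRate 0) := by
    rw [asympRate_half, asympRate_zero]; norm_num
  have := intermediate_value_Ioo' (by norm_num : (0:ℝ) ≤ 1 / 2) hcont h0
  obtain ⟨Q, hQ, hQ0⟩ := this
  exact ⟨Q, hQ, hQ0⟩
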